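/- arXiv:2509.24292 — 2 statements merged into one kernel-verified Lean document; each statement's English description precedes it below -/
import Mathlib

section
/- Let S = ∏_{n ≥ 1} Z/p^n Z with componentwise multiplication (p prime), and let x = (x_n) with x_n = p mod p^n. Then for every k ≥ 1, r(x^{k+1}) ≠ r(x^k), where r(s) = {(u,v) : su = sv}; consequently S as a right S-act is Hopfian but not strongly Hopfian. -/
structure RAct (S : Type*) [Monoid S] (A : Type*) where
  act : A → S → A
  act_one : ∀ a, act a 1 = a
  act_mul : ∀ a s t, act a (s * t) = act (act a s) t

variable {S : Type*} [Monoid S] {A B : Type*}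

/-- `f` is an S-act homomorphism from `M` to `N`. -/
def IsHom (M : RAct S A) (N : RAct S B) (f : A → B) : Prop :=
  ∀ a s, f (M.act a s) = N.act (f a) s

/-- `f` is an S-act endomorphism of `M`. -/
def IsEnd (M : RAct S A) (f : A → A) : Prop := IsHom M M f

/-- `r` is a congruence on the S-act `M`. -/
def IsCong (M : RAct S A) (r : A → A → Prop) : Prop :=
  Equivalence r ∧ ∀ a b s, r a b → r (M.act a s) (M.act b s)

/-- The kernel congruence `K_f`. -/
def kerC {A : Type*} (f : A → A) : A → A → Prop := fun a b => f a = f b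

/-- The image congruence `I_f = (im f × im f) ∪ Δ`. -/
def imC {A : Type*} (f : A → A) : A → A → Prop :=
  fun a b => a = b ∨ (a ∈ Set.range f ∧ b ∈ Set.range f)

/-- The diagonal relation. -/
def diagR (A : Type*) : A → A → Prop := fun a b => a = b

/-- The full relation. -/
def fullR (A : Type*) : A → A → Prop := fun _ _ => True

/-- `M` is strongly Hopfian: the chain `K_f ⊆ K_{f²} ⊆ ⋯` stabilizes for every endomorphism. -/
def StronglyHopfian (M : RAct S A) : Prop :=
  ∀ f : A → A, IsEnd M f → ∃ n : ℕ, 1 ≤ n ∧ ∀ m, n ≤ m → kerC (f^[m]) = kerC (f^[n])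

/-- `M` is strongly co-Hopfian: the chain `I_f ⊇ I_{f²} ⊇ ⋯` stabilizes for every endomorphism. -/
def StronglyCoHopfian (M : RAct S A) : Prop :=
  ∀ f : A → A, IsEnd M f → ∃ n : ℕ, 1 ≤ n ∧ ∀ m, n ≤ m → imC (f^[m]) = imC (f^[n])

/-- `M` is Hopfian: every surjective endomorphism is injective. -/
def Hopfian (M : RAct S A) : Prop :=
  ∀ f : A → A, IsEnd M f → Function.Surjective f → Function.Injective f

/-- `M` is co-Hopfian: every injective endomorphism is surjective. -/
def CoHopfian (M : RAct S A) : Prop :=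
  ∀ f : A → A, IsEnd M f → Function.Injective f → Function.Surjective f

/-- ACC on congruences. -/
def NoetherianAct (M : RAct S A) : Prop :=
  ∀ c : ℕ → (A → A → Prop), (∀ n, IsCong M (c n)) →
    (∀ n a b, c n a b → c (n + 1) a b) → ∃ N, ∀ m, N ≤ m → c m = c N

/-- DCC on congruences. -/
def ArtinianAct (M : RAct S A) : Prop :=
  ∀ c : ℕ → (A → A → Prop), (∀ n, IsCong M (c n)) →
    (∀ n a b, c (n + 1) a b → c n a b) → ∃ N, ∀ m, N ≤ m → c m = c N

/-- The monoid `S` as a right act over itself. -/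
def mulAct (S : Type*) [Monoid S] : RAct S S :=
  ⟨fun x s => x * s, mul_one, fun a s t => (mul_assoc a s t).symm⟩
/-- The monoid `∏_{n ≥ 1} ℤ/pⁿℤ` (indexed so that coordinate `n : ℕ` is `ℤ/p^{n+1}ℤ`). -/
def Pprod (p : ℕ) : Type := ∀ n : ℕ, ZMod (p ^ (n + 1))

instance (p : ℕ) : CommMonoid (Pprod p) :=
  inferInstanceAs (CommMonoid (∀ n : ℕ, ZMod (p ^ (n + 1))))

/-- The element `x = (p mod pⁿ)ₙ`. -/
def xp (p : ℕ) : Pprod p := fun n => (p : ZMod (p ^ (n + 1)))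

/-!
An endomorphism `f` of `S_S` is left multiplication by `f 1`, so when `S` is commutative a
surjective one is multiplication by a unit and hence injective. Left multiplication by `x` is
an endomorphism whose `m`-th iterate has kernel `r(xᵐ)`, and this chain never stabilizes:
`u = (p^{n-k})ₙ` (truncated exponent) satisfies `x^{k+1} u = 0`, while `(xᵏ u)ₖ = pᵏ ≠ 0`
in `ℤ/p^{k+1}ℤ`.
-/

section MulAct

variable {M : Type*}

lemma IsEnd.mulAct_apply [Monoid M] {f : M → M} (hf : IsEnd (mulAct M) f) (s : M) :
    f s = f 1 * s := by
  simpa [mulAct] using hf 1 s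

lemma isEnd_mulAct_mul_left [Monoid M] (a : M) : IsEnd (mulAct M) (a * ·) :=
  fun s t => (mul_assoc a s t).symm

lemma hopfian_mulAct [CommMonoid M] : Hopfian (mulAct M) := by
  intro f hf hsurj u v huv
  obtain ⟨b, hb⟩ := hsurj 1
  have hunit : IsUnit (f 1) := IsUnit.of_mul_eq_one b (by rw [← hf.mulAct_apply, hb])
  exact hunit.mul_left_cancel (by rwa [← hf.mulAct_apply, ← hf.mulAct_apply])

lemma not_stronglyHopfian_mulAct [Monoid M] (a : M)
    (ha : ∀ k : ℕ, 1 ≤ k → kerC (a ^ k * ·) ≠ kerC (a ^ (k + 1) * ·)) :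
    ¬ StronglyHopfian (mulAct M) := by
  intro hsh
  obtain ⟨n, hn, hstable⟩ := hsh (a * ·) (isEnd_mulAct_mul_left a)
  apply ha n hn
  simpa only [mul_left_iterate] using (hstable (n + 1) n.le_succ).symm

end MulAct

lemma ZMod.natCast_pow_ne_zero_of_lt {p m n : ℕ} (hp : 1 < p) (h : m < n) :
    (p : ZMod (p ^ n)) ^ m ≠ 0 := by
  rw [← Nat.cast_pow, Ne, ZMod.natCast_eq_zero_iff, Nat.pow_dvd_pow_iff_le_right hp]
  omega

lemma kerC_xp_pow_ne {p : ℕ} (hp : 1 < p) (k : ℕ) :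
    kerC (xp p ^ k * ·) ≠ kerC (xp p ^ (k + 1) * ·) := by
  intro h
  let u : Pprod p := fun n => (p : ZMod (p ^ (n + 1))) ^ (n - k)
  let z : Pprod p := fun _ => 0
  have hu : xp p ^ (k + 1) * u = xp p ^ (k + 1) * z := by
    funext n
    change (p : ZMod (p ^ (n + 1))) ^ (k + 1) * p ^ (n - k) = p ^ (k + 1) * 0
    rw [← pow_add, mul_zero]
    exact ZMod.natCast_pow_eq_zero_of_le p (by omega)
  have hk : (p : ZMod (p ^ (k + 1))) ^ k * p ^ (k - k) = p ^ k * 0 :=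
    congrFun ((congrFun (congrFun h u) z).mpr hu) k
  rw [Nat.sub_self, pow_zero, mul_one, mul_zero] at hk
  exact ZMod.natCast_pow_ne_zero_of_lt hp k.lt_succ_self hk

/-- For every `k ≥ 1`, `r(x^{k+1}) ≠ r(x^k)`; consequently `S_S` is Hopfian but not
strongly Hopfian. -/
theorem stmt14 (p : ℕ) (hp : p.Prime) :
    (∀ k : ℕ, 1 ≤ k →
      (fun u v : Pprod p => xp p ^ k * u = xp p ^ k * v) ≠
      (fun u v : Pprod p => xp p ^ (k + 1) * u = xp p ^ (k + 1) * v)) ∧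
    Hopfian (mulAct (Pprod p)) ∧ ¬ StronglyHopfian (mulAct (Pprod p)) := by
  have hr : ∀ k : ℕ, 1 ≤ k → kerC (xp p ^ k * ·) ≠ kerC (xp p ^ (k + 1) * ·) :=
    fun k _ => kerC_xp_pow_ne hp.one_lt k
  exact ⟨hr, hopfian_mulAct, not_stronglyHopfian_mulAct (xp p) hr⟩
end

section
/- Let A be a finitely generated S-act such that every factor act A/ρ (for every congruence ρ on A) is co-Hopfian. Then A is strongly co-Hopfian: for every endomorphism f of A there exists m with im f^m = im f^{m+1}. -/
variable {S : Type*} [Monoid S] {A B : Type*}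

/-- A congruence as a setoid. -/
def congSetoid {A : Type*} (r : A → A → Prop) (hr : Equivalence r) : Setoid A := ⟨r, hr⟩

/-- The factor act `A/ρ` of an S-act by a congruence `ρ`. -/
def congQuotAct (M : RAct S A) (r : A → A → Prop) (hr : IsCong M r) :
    RAct S (Quotient (congSetoid r hr.1)) where
  act := fun q s => Quotient.map' (fun a => M.act a s) (fun a b h => hr.2 a b s h) q
  act_one := by
    intro q
    induction q using Quotient.inductionOn'
    exact congrArg (Quotient.mk'' ·) (M.act_one _)
  act_mul := by
    intro q s t
    induction q using Quotient.inductionOn'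
    exact congrArg (Quotient.mk'' ·) (M.act_mul _ s t)

/-!
Let `ρ` be the union of the kernel congruences of the iterates `f^[k]`. Then `f` induces an
injective endomorphism of `A/ρ`, which is onto by hypothesis; hence every `x` satisfies
`f^[k] x ∈ range f^[k+1]` for some `k`. Taking `k` large enough for each of the finitely many
generators and using that `range f^[m]` is a subact gives `range f^[m] = range f^[m+1]`.
-/

section StronglyCoHopfian

variable {M : RAct S A} {f : A → A}

theorem IsEnd.iterate (hf : IsEnd M f) (k : ℕ) : IsEnd M (f^[k]) := by
  induction k with
  | zero => intro x s; rfl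
  | succ k ih =>
    intro x s
    rw [Function.iterate_succ_apply', Function.iterate_succ_apply', ih, hf]

theorem iterate_eq_iterate_of_le {k l : ℕ} {x y : A} (hkl : k ≤ l) (h : f^[k] x = f^[k] y) :
    f^[l] x = f^[l] y := by
  rw [← Nat.sub_add_cancel hkl, Function.iterate_add_apply, Function.iterate_add_apply, h]

theorem iterate_mem_range_succ_of_le {k l : ℕ} {x : A} (hkl : k ≤ l)
    (h : f^[k] x ∈ Set.range (f^[k + 1])) : f^[l] x ∈ Set.range (f^[l + 1]) := by
  obtain ⟨b, hb⟩ := h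
  obtain ⟨d, rfl⟩ := Nat.exists_eq_add_of_le hkl
  refine ⟨b, ?_⟩
  rw [add_comm k d, add_assoc, Function.iterate_add_apply, hb, ← Function.iterate_add_apply]

/-- The union `ρ = ⋃ₖ K_{f^k}` of the kernel congruences of the iterates of `f`. -/
def eventualKer (f : A → A) : A → A → Prop := fun x y => ∃ k, f^[k] x = f^[k] y

theorem eventualKer_equivalence (f : A → A) : Equivalence (eventualKer f) where
  refl _ := ⟨0, rfl⟩
  symm := fun ⟨k, h⟩ => ⟨k, h.symm⟩
  trans := fun ⟨k, h⟩ ⟨l, h'⟩ =>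
    ⟨max k l, (iterate_eq_iterate_of_le (le_max_left k l) h).trans
      (iterate_eq_iterate_of_le (le_max_right k l) h')⟩

theorem IsEnd.isCong_eventualKer (hf : IsEnd M f) : IsCong M (eventualKer f) :=
  ⟨eventualKer_equivalence f, fun _ _ s ⟨k, h⟩ => ⟨k, by rw [hf.iterate, hf.iterate, h]⟩⟩

theorem eventualKer_apply_iff {x y : A} : eventualKer f (f x) (f y) ↔ eventualKer f x y := by
  simp only [eventualKer, ← Function.iterate_succ_apply]
  constructor
  · rintro ⟨k, h⟩
    exact ⟨k + 1, h⟩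
  · rintro ⟨k, h⟩
    exact ⟨k, by rw [Function.iterate_succ_apply', Function.iterate_succ_apply', h]⟩

def eventualKerMap (hf : IsEnd M f) :
    Quotient (congSetoid _ hf.isCong_eventualKer.1) →
      Quotient (congSetoid _ hf.isCong_eventualKer.1) :=
  Quotient.map' f fun _ _ => eventualKer_apply_iff.mpr

theorem IsEnd.eventualKerMap (hf : IsEnd M f) :
    IsEnd (congQuotAct M _ hf.isCong_eventualKer) (eventualKerMap hf) := by
  intro q s
  induction q using Quotient.inductionOn'
  exact congrArg (Quotient.mk'' ·) (hf _ s)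

theorem eventualKerMap_injective (hf : IsEnd M f) : Function.Injective (eventualKerMap hf) := by
  intro q q'
  induction q using Quotient.inductionOn'
  induction q' using Quotient.inductionOn'
  intro h
  exact Quotient.sound' (eventualKer_apply_iff.mp (Quotient.exact' h))

theorem exists_iterate_mem_range_succ (hf : IsEnd M f)
    (hco : CoHopfian (congQuotAct M _ hf.isCong_eventualKer)) (x : A) :
    ∃ k, f^[k] x ∈ Set.range (f^[k + 1]) := by
  obtain ⟨q, hq⟩ := hco _ hf.eventualKerMap (eventualKerMap_injective hf) (Quotient.mk'' x)
  induction q using Quotient.inductionOn' with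
  | h b =>
    obtain ⟨k, hk⟩ : eventualKer f (f b) x := Quotient.exact' hq
    exact ⟨k, b, by rwa [Function.iterate_succ_apply]⟩

theorem range_iterate_eq_succ_of_generators (hf : IsEnd M f) {n m : ℕ} {a : Fin n → A}
    (ha : ∀ x : A, ∃ (i : Fin n) (s : S), x = M.act (a i) s)
    (hm : ∀ i, f^[m] (a i) ∈ Set.range (f^[m + 1])) :
    Set.range (f^[m]) = Set.range (f^[m + 1]) := by
  refine subset_antisymm ?_ ?_
  · rintro _ ⟨x, rfl⟩
    obtain ⟨i, s, rfl⟩ := ha x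
    obtain ⟨b, hb⟩ := hm i
    exact ⟨M.act b s, by rw [hf.iterate, hb, hf.iterate]⟩
  · rw [Function.iterate_succ]
    exact Set.range_comp_subset_range f (f^[m])

end StronglyCoHopfian

/-- If `A` is finitely generated and every factor act of `A` is co-Hopfian, then `A` is
strongly co-Hopfian. -/
theorem stmt19 (M : RAct S A)
    (hfg : ∃ (n : ℕ) (a : Fin n → A), ∀ x : A, ∃ (i : Fin n) (s : S), x = M.act (a i) s)
    (hco : ∀ (r : A → A → Prop) (hr : IsCong M r), CoHopfian (congQuotAct M r hr))
    (f : A → A) (hf : IsEnd M f) :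
    ∃ m : ℕ, 1 ≤ m ∧ Set.range (f^[m]) = Set.range (f^[m + 1]) := by
  obtain ⟨n, a, ha⟩ := hfg
  choose K hK using fun i => exists_iterate_mem_range_succ hf (hco _ _) (a i)
  refine ⟨Finset.univ.sup K + 1, Nat.le_add_left 1 _, ?_⟩
  refine range_iterate_eq_succ_of_generators hf ha fun i => iterate_mem_range_succ_of_le ?_ (hK i)
  exact (Finset.le_sup (Finset.mem_univ i)).trans (Nat.le_succ _)
end
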